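/- Let f ∈ C^∞(ℝ^d) and suppose there exists C > 0 such that |x^β ∂^α f(x)| ≤ C^{|α|+|β|+1} M(α,β) for all α, β ∈ ℕ^d and x ∈ ℝ^d, where M(α,β) = (|α|!)^{1/2}·(max(|α|,|β|)!)^{1/2}. Then there exist constants C' > 0 and c > 0 such that |∂^α f(x)| ≤ C'^{|α|+1} α! ⟨x⟩^{−|α|} e^{−c|x|²} for all α ∈ ℕ^d and x ∈ ℝ^d. -/

import Mathlib

open scoped BigOperators
open MeasureTheory

noncomputable section

/-- ℝ^d with the Euclidean norm. -/
abbrev Rd (d : ℕ) := EuclideanSpace ℝ (Fin d)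
/-- ℂ^d with the Euclidean norm. -/
abbrev Cd (d : ℕ) := EuclideanSpace ℂ (Fin d)

/-- Partial derivative in direction `j`. -/
noncomputable def pd {d : ℕ} {F : Type*} [NormedAddCommGroup F] [NormedSpace ℝ F]
    (j : Fin d) (f : Rd d → F) : Rd d → F :=
  fun x => fderiv ℝ f x (EuclideanSpace.single j 1)

/-- Iterated multi-index partial derivative `∂^α`. -/
noncomputable def mderiv {d : ℕ} {F : Type*} [NormedAddCommGroup F] [NormedSpace ℝ F]
    (α : Fin d → ℕ) (f : Rd d → F) : Rd d → F :=
  (List.finRange d).foldr (fun j g => (pd j)^[α j] g) f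

/-- `|α| = α_1 + ⋯ + α_d`. -/
def msize {d : ℕ} (α : Fin d → ℕ) : ℕ := ∑ j, α j

/-- `α! = α_1! ⋯ α_d!`. -/
def mfact {d : ℕ} (α : Fin d → ℕ) : ℕ := ∏ j, Nat.factorial (α j)

/-- `x^β = x_1^{β_1} ⋯ x_d^{β_d}`. -/
noncomputable def mpow {d : ℕ} (x : Rd d) (β : Fin d → ℕ) : ℝ := ∏ j, (x j) ^ (β j)

/-- `M(α,β) = (|α|!)^{1/2} · (max(|α|,|β|)!)^{1/2}`. -/
noncomputable def Mab {d : ℕ} (α β : Fin d → ℕ) : ℝ :=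
  Real.sqrt (Nat.factorial (msize α)) * Real.sqrt (Nat.factorial (max (msize α) (msize β)))

/-- The Japanese bracket `⟨x⟩ = (1 + |x|²)^{1/2}`. -/
noncomputable def jap {d : ℕ} (x : Rd d) : ℝ := Real.sqrt (1 + ‖x‖^2)

/-- The function `x ↦ x^β ∂^α f(x)`. -/
noncomputable def wD {d : ℕ} (α β : Fin d → ℕ) (f : Rd d → ℂ) : Rd d → ℂ :=
  fun x => (mpow x β : ℂ) * mderiv α f x

/-- The `L²(ℝ^d)` norm. -/
noncomputable def L2norm {d : ℕ} (f : Rd d → ℂ) : ℝ := (eLpNorm f 2 volume).toReal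

/-- All pairs of multi-indices `(α, β)` with `|α| + |β| ≤ N`. -/
def mIdx (d N : ℕ) : Finset ((Fin d → ℕ) × (Fin d → ℕ)) :=
  ((Finset.Iic (fun _ => N : Fin d → ℕ)) ×ˢ (Finset.Iic (fun _ => N : Fin d → ℕ))).filter
    (fun p => msize p.1 + msize p.2 ≤ N)

/-- The `Q^s` norm: `‖f‖_{Q^s} = Σ_{|γ|+|δ| ≤ s} ‖x^δ ∂^γ f‖_{L²}`. -/
noncomputable def Qnorm (d s : ℕ) (f : Rd d → ℂ) : ℝ :=
  ∑ p ∈ mIdx d s, L2norm (wD p.1 p.2 f)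

/-- The partial sum `S_N^{s,ε}[u] = Σ_{|α|+|β| ≤ N} ε^{|α|+|β|} M(α,β)⁻¹ ‖x^β ∂^α u‖_{Q^s}`. -/
noncomputable def SN (d s : ℕ) (ε : ℝ) (N : ℕ) (u : Rd d → ℂ) : ℝ :=
  ∑ p ∈ mIdx d N, ε ^ (msize p.1 + msize p.2) / Mab p.1 p.2 * Qnorm d s (wD p.1 p.2 u)

/-- Real part of a point of ℂ^d. -/
noncomputable def rePart {d : ℕ} (z : Cd d) : Rd d := WithLp.toLp 2 (fun j => (z j).re)
/-- Imaginary part of a point of ℂ^d. -/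
noncomputable def imPart {d : ℕ} (z : Cd d) : Rd d := WithLp.toLp 2 (fun j => (z j).im)
/-- Canonical embedding ℝ^d → ℂ^d. -/
noncomputable def toCd {d : ℕ} (x : Rd d) : Cd d := WithLp.toLp 2 (fun j => (x j : ℂ))

/-- The open sector `{z = x + iy : |y| < ε (1 + |x|)}` in ℂ^d. -/
def sector (d : ℕ) (ε : ℝ) : Set (Cd d) :=
  {z | ‖imPart z‖ < ε * (1 + ‖rePart z‖)}

/-- The Fourier transform `û(ξ) = ∫ e^{-i y·ξ} u(y) dy`. -/
noncomputable def FT {d : ℕ} (u : Rd d → ℂ) (ξ : Rd d) : ℂ :=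
  ∫ y : Rd d, Complex.exp (-Complex.I * ((inner ℝ y ξ : ℝ) : ℂ)) * u y

/-- The pseudodifferential operator
`p(x,D)u(x) = (2π)^{-d} ∫ e^{i x·ξ} p(x,ξ) û(ξ) dξ`. -/
noncomputable def psiOp {d : ℕ} (p : Rd d → Rd d → ℂ) (u : Rd d → ℂ) : Rd d → ℂ :=
  fun x => (((2 * Real.pi) ^ d : ℝ) : ℂ)⁻¹ *
    ∫ ξ : Rd d, Complex.exp (Complex.I * ((inner ℝ x ξ : ℝ) : ℂ)) * p x ξ * FT u ξ

/-- The mixed derivative `∂_ξ^α ∂_x^β p(x, ξ)` of a symbol. -/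
noncomputable def symbDeriv {d : ℕ} (α β : Fin d → ℕ) (p : Rd d → Rd d → ℂ)
    (x ξ : Rd d) : ℂ :=
  mderiv β (fun x' => mderiv α (fun ξ' => p x' ξ') ξ) x


/-!
Taking `β = 0` gives `|∂^α f| ≤ C^{|α|+1} |α|!`, which settles `|x| ≤ 1`. For `|x| > 1` choose a
coordinate with `d x_j² ≥ |x|²` and test against `β = (|α| + k) e_j`: as
`(|α| + k)! ≤ 2^{|α|+k} |α|! k!`, this bounds `|x_j|^k · |x_j|^{|α|} |∂^α f(x)|` by `A B^k √(k!)`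
for every `k`, and choosing `k ≈ x_j² / (4B²)` turns such moment bounds into Gaussian decay
`e^{-c x_j²}`. The factor `|x_j|^{|α|} ≥ (2d)^{-|α|/2} ⟨x⟩^{|α|}` supplies the weight, and
`|α|! ≤ d^{|α|} α!` gives the stated form.
-/

open Finset Real
open scoped Nat

theorem Nat.multinomial_univ_le_card_pow {ι : Type*} [Fintype ι] [DecidableEq ι] (f : ι → ℕ) :
    Nat.multinomial (univ : Finset ι) f ≤ Fintype.card ι ^ (∑ i, f i) := by
  have h := Finset.sum_pow_eq_sum_piAntidiag (univ : Finset ι) (fun _ => (1 : ℕ)) (∑ i, f i)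
  simp only [sum_const, smul_eq_mul, mul_one, one_pow, prod_const_one, Nat.cast_id] at h
  rw [← Finset.card_univ, h]
  exact single_le_sum (f := fun k => Nat.multinomial univ k) (fun _ _ => Nat.zero_le _)
    (mem_piAntidiag.2 ⟨rfl, fun i _ => mem_univ i⟩)

theorem Nat.factorial_sum_le_card_pow_mul_prod {ι : Type*} [Fintype ι] [DecidableEq ι]
    (f : ι → ℕ) : (∑ i, f i)! ≤ Fintype.card ι ^ (∑ i, f i) * ∏ i, (f i)! := by
  rw [← Nat.multinomial_spec, mul_comm]
  exact Nat.mul_le_mul_right _ (Nat.multinomial_univ_le_card_pow f)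

theorem Nat.add_factorial_le_two_pow_mul (m k : ℕ) : (m + k)! ≤ 2 ^ (m + k) * (m ! * k !) := by
  rw [← Nat.add_choose_mul_factorial_mul_factorial m k, mul_assoc]
  exact Nat.mul_le_mul_right _ (Nat.choose_le_two_pow _ _)

theorem exists_pow_mul_sqrt_factorial_le {a : ℝ} (ha : 0 < a) :
    ∃ k : ℕ, a ^ k * √(k ! : ℝ) ≤ 2 * exp (-log 2 / (4 * a ^ 2)) := by
  set t := 1 / (4 * a ^ 2)
  have ht : 0 ≤ t := by positivity
  refine ⟨⌊t⌋₊, ?_⟩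
  set k := ⌊t⌋₊
  have hak : a ^ 2 * k ≤ 1 / 4 := by
    calc a ^ 2 * k ≤ a ^ 2 * t := by gcongr; exact Nat.floor_le ht
      _ = 1 / 4 := by simp only [t]; field_simp
  have half : a ^ k * √(k ! : ℝ) ≤ (1 / 2) ^ k := by
    refine le_of_pow_le_pow_left₀ two_ne_zero (by positivity) ?_
    calc (a ^ k * √(k ! : ℝ)) ^ 2 = (a ^ 2) ^ k * k ! := by
          rw [mul_pow, sq_sqrt (by positivity), ← pow_mul, ← pow_mul, mul_comm 2 k]
      _ ≤ (a ^ 2) ^ k * (k : ℝ) ^ k := by gcongr; exact_mod_cast Nat.factorial_le_pow k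
      _ = (a ^ 2 * k) ^ k := (mul_pow _ _ _).symm
      _ ≤ (1 / 4) ^ k := by gcongr
      _ = ((1 / 2) ^ k) ^ 2 := by rw [← pow_mul, mul_comm, pow_mul]; norm_num
  have hk : t - 1 < k := Nat.sub_one_lt_floor t
  calc a ^ k * √(k ! : ℝ) ≤ (1 / 2) ^ k := half
    _ = exp (k * -log 2) := by rw [exp_nat_mul, exp_neg, exp_log two_pos, one_div]
    _ ≤ exp (log 2 * (1 - t)) := exp_le_exp.2 (by nlinarith [log_pos one_lt_two])
    _ = 2 * exp (-log 2 / (4 * a ^ 2)) := by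
        rw [mul_sub, mul_one, sub_eq_add_neg, exp_add, exp_log two_pos]; congr 2; ring

theorem le_two_mul_exp_of_forall_pow_mul_le {t D A B : ℝ} (ht : 0 ≤ t) (hD : 0 ≤ D) (hB : 0 < B)
    (h : ∀ k : ℕ, t ^ k * D ≤ A * B ^ k * √(k ! : ℝ)) :
    D ≤ 2 * A * exp (-log 2 * t ^ 2 / (4 * B ^ 2)) := by
  have hDA : D ≤ A := by simpa using h 0
  rcases ht.eq_or_lt with rfl | ht
  · simp only [ne_eq, OfNat.ofNat_ne_zero, not_false_eq_true, zero_pow, mul_zero, zero_div,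
      exp_zero, mul_one]
    linarith
  obtain ⟨k, hk⟩ := exists_pow_mul_sqrt_factorial_le (div_pos hB ht)
  calc D = t ^ k * D / t ^ k := by field_simp
    _ ≤ A * B ^ k * √(k ! : ℝ) / t ^ k := by gcongr ?_ / _; exact h k
    _ = A * ((B / t) ^ k * √(k ! : ℝ)) := by rw [div_pow]; field_simp
    _ ≤ A * (2 * exp (-log 2 / (4 * (B / t) ^ 2))) := by gcongr; linarith
    _ = 2 * A * exp (-log 2 * t ^ 2 / (4 * B ^ 2)) := by
        rw [div_pow]; ring_nf; field_simp

theorem mul_pow_le_max_pow_succ {a b : ℝ} (ha : 0 ≤ a) (hb : 0 ≤ b) (n : ℕ) :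
    a * b ^ n ≤ max a b ^ (n + 1) := by
  rw [pow_succ']
  exact mul_le_mul (le_max_left a b) (pow_le_pow_left₀ hb (le_max_right a b) n)
    (by positivity) (ha.trans (le_max_left a b))

theorem EuclideanSpace.exists_norm_sq_le_card_mul_sq {ι : Type*} [Fintype ι]
    {x : EuclideanSpace ℝ ι} (hx : x ≠ 0) : ∃ j, ‖x‖ ^ 2 ≤ Fintype.card ι * x j ^ 2 := by
  obtain ⟨i, -⟩ : ∃ i, x i ≠ 0 := by
    by_contra! h
    exact hx (by ext i; exact h i)
  obtain ⟨j, -, hj⟩ := exists_max_image univ (fun i => x i ^ 2) ⟨i, mem_univ i⟩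
  refine ⟨j, ?_⟩
  calc ‖x‖ ^ 2 = ∑ i, x i ^ 2 := EuclideanSpace.real_norm_sq_eq x
    _ ≤ ∑ _i : ι, x j ^ 2 := sum_le_sum fun i _ => hj i (mem_univ i)
    _ = Fintype.card ι * x j ^ 2 := by simp

theorem jap_pos {d : ℕ} (x : Rd d) : 0 < jap x := by
  unfold jap
  positivity

theorem jap_le_sqrt_two_mul_max {d : ℕ} (x : Rd d) : jap x ≤ √2 * max 1 ‖x‖ := by
  have h1 : 1 ≤ max 1 ‖x‖ := le_max_left _ _
  have h2 : ‖x‖ ≤ max 1 ‖x‖ := le_max_right _ _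
  rw [jap, ← sqrt_sq (zero_le_one.trans h1), ← sqrt_mul zero_le_two]
  gcongr
  nlinarith [norm_nonneg x]

theorem msize_zero {d : ℕ} : msize (0 : Fin d → ℕ) = 0 := by simp [msize]

theorem mpow_zero {d : ℕ} (x : Rd d) : mpow x 0 = 1 := by simp [mpow]

theorem Mab_zero {d : ℕ} (α : Fin d → ℕ) : Mab α 0 = (msize α)! := by
  rw [Mab, msize_zero, Nat.max_zero, mul_self_sqrt (Nat.cast_nonneg _)]

theorem msize_single {d : ℕ} (j : Fin d) (n : ℕ) : msize (Pi.single j n) = n := by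
  simp [msize]

theorem mpow_single {d : ℕ} (x : Rd d) (j : Fin d) (n : ℕ) : mpow x (Pi.single j n) = x j ^ n := by
  rw [mpow, prod_eq_single j (fun i _ hij => by simp [hij]) (by simp)]
  simp

theorem factorial_msize_le {d : ℕ} (α : Fin d → ℕ) : (msize α)! ≤ d ^ msize α * mfact α := by
  simpa [msize, mfact] using Nat.factorial_sum_le_card_pow_mul_prod α

theorem norm_wD {d : ℕ} (α β : Fin d → ℕ) (f : Rd d → ℂ) (x : Rd d) :
    ‖wD α β f x‖ = |mpow x β| * ‖mderiv α f x‖ := by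
  rw [wD, norm_mul, Complex.norm_real, Real.norm_eq_abs]

section PointwiseBounds

variable {d : ℕ} {f : Rd d → ℂ} {C c : ℝ} {α : Fin d → ℕ} {x : Rd d}

theorem norm_mderiv_le_of_weighted_bounds
    (hest : ∀ β, ‖wD α β f x‖ ≤ C ^ (msize α + msize β + 1) * Mab α β) :
    ‖mderiv α f x‖ ≤ C ^ (msize α + 1) * (msize α)! := by
  simpa [norm_wD, mpow_zero, msize_zero, Mab_zero] using hest 0

theorem pow_abs_mul_norm_mderiv_le_of_weighted_bounds
    (hest : ∀ β, ‖wD α β f x‖ ≤ C ^ (msize α + msize β + 1) * Mab α β)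
    (hC : 0 ≤ C) (j : Fin d) (k : ℕ) :
    |x j| ^ k * (|x j| ^ msize α * ‖mderiv α f x‖) ≤
      C ^ (2 * msize α + 1) * (msize α)! * √2 ^ msize α * (C * √2) ^ k * √(k ! : ℝ) := by
  set m := msize α
  have hmk : √((m + k)! : ℝ) ≤ √2 ^ (m + k) * √(m ! : ℝ) * √(k ! : ℝ) := by
    rw [sqrt_le_iff]
    refine ⟨by positivity, ?_⟩
    rw [mul_pow, mul_pow, sq_sqrt (by positivity), sq_sqrt (by positivity), ← pow_mul,
      mul_comm _ 2, pow_mul, sq_sqrt zero_le_two, mul_assoc]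
    exact_mod_cast Nat.add_factorial_le_two_pow_mul m k
  have h := hest (Pi.single j (m + k))
  rw [norm_wD, mpow_single, msize_single, Mab, msize_single, max_eq_right (Nat.le_add_right m k),
    abs_pow] at h
  calc |x j| ^ k * (|x j| ^ m * ‖mderiv α f x‖) = |x j| ^ (m + k) * ‖mderiv α f x‖ := by ring
    _ ≤ C ^ (m + (m + k) + 1) * (√(m ! : ℝ) * √((m + k)! : ℝ)) := h
    _ ≤ C ^ (m + (m + k) + 1) * (√(m ! : ℝ) * (√2 ^ (m + k) * √(m ! : ℝ) * √(k ! : ℝ))) := by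
        gcongr
    _ = C ^ (2 * m + 1) * (√(m ! : ℝ) * √(m ! : ℝ)) * √2 ^ m * (C * √2) ^ k * √(k ! : ℝ) := by
        ring
    _ = _ := by rw [mul_self_sqrt (Nat.cast_nonneg _)]

theorem weighted_norm_mderiv_le_of_norm_le_one
    (hest : ∀ β, ‖wD α β f x‖ ≤ C ^ (msize α + msize β + 1) * Mab α β)
    (hc : 0 ≤ c) (hx : ‖x‖ ≤ 1) :
    jap x ^ msize α * exp (c * ‖x‖ ^ 2) * ‖mderiv α f x‖ ≤
      C * exp c * (√2 * C) ^ msize α * (msize α)! := by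
  have hjap : jap x ≤ √2 := by simpa [max_eq_left hx] using jap_le_sqrt_two_mul_max x
  have hexp : exp (c * ‖x‖ ^ 2) ≤ exp c := by
    gcongr
    exact mul_le_of_le_one_right hc (pow_le_one₀ (norm_nonneg x) hx)
  calc jap x ^ msize α * exp (c * ‖x‖ ^ 2) * ‖mderiv α f x‖
      ≤ √2 ^ msize α * exp c * (C ^ (msize α + 1) * (msize α)!) := by
        gcongr
        · exact (jap_pos x).le
        · exact norm_mderiv_le_of_weighted_bounds hest
    _ = C * exp c * (√2 * C) ^ msize α * (msize α)! := by ring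

theorem weighted_norm_mderiv_le_of_one_lt_norm
    (hest : ∀ β, ‖wD α β f x‖ ≤ C ^ (msize α + msize β + 1) * Mab α β)
    (hC : 0 < C) (hc₀ : 0 ≤ c)
    (hc : c * d ≤ log 2 / (8 * C ^ 2)) (hx : 1 < ‖x‖) :
    jap x ^ msize α * exp (c * ‖x‖ ^ 2) * ‖mderiv α f x‖ ≤
      2 * C * (2 * C ^ 2 * √d) ^ msize α * (msize α)! := by
  set m := msize α
  obtain ⟨j, hj⟩ := EuclideanSpace.exists_norm_sq_le_card_mul_sq
    (norm_pos_iff.1 (zero_lt_one.trans hx))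
  rw [Fintype.card_fin, ← sq_abs (x j)] at hj
  set r := |x j|
  have hdecay := le_two_mul_exp_of_forall_pow_mul_le (abs_nonneg _) (by positivity)
    (by positivity) (pow_abs_mul_norm_mderiv_le_of_weighted_bounds hest hC.le j)
  have hjap : jap x ≤ √2 * √d * r := by
    refine (jap_le_sqrt_two_mul_max x).trans ?_
    rw [max_eq_right hx.le, mul_assoc]
    gcongr
    refine le_of_pow_le_pow_left₀ two_ne_zero (by positivity) ?_
    rwa [mul_pow, sq_sqrt (Nat.cast_nonneg d)]
  have hexp : exp (c * ‖x‖ ^ 2) * exp (-log 2 * r ^ 2 / (4 * (C * √2) ^ 2)) ≤ 1 := by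
    rw [← exp_add, exp_le_one_iff, mul_pow, sq_sqrt zero_le_two, neg_mul, neg_div,
      ← sub_eq_add_neg, sub_nonpos]
    calc c * ‖x‖ ^ 2 ≤ c * d * r ^ 2 := by rw [mul_assoc]; gcongr
      _ ≤ log 2 / (8 * C ^ 2) * r ^ 2 := by gcongr
      _ = log 2 * r ^ 2 / (4 * (C ^ 2 * 2)) := by ring
  calc jap x ^ m * exp (c * ‖x‖ ^ 2) * ‖mderiv α f x‖
      ≤ (√2 * √d * r) ^ m * exp (c * ‖x‖ ^ 2) * ‖mderiv α f x‖ := by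
        gcongr
        exact (jap_pos x).le
    _ = (√2 * √d) ^ m * exp (c * ‖x‖ ^ 2) * (r ^ m * ‖mderiv α f x‖) := by ring
    _ ≤ (√2 * √d) ^ m * exp (c * ‖x‖ ^ 2) * (2 * (C ^ (2 * m + 1) * m ! * √2 ^ m) *
          exp (-log 2 * r ^ 2 / (4 * (C * √2) ^ 2))) := by gcongr
    _ = 2 * C * ((√2 * √2) * C ^ 2 * √d) ^ m * m ! *
          (exp (c * ‖x‖ ^ 2) * exp (-log 2 * r ^ 2 / (4 * (C * √2) ^ 2))) := by ring
    _ ≤ 2 * C * (2 * C ^ 2 * √d) ^ m * m ! := by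
        rw [mul_self_sqrt zero_le_two]
        exact mul_le_of_le_one_right (by positivity) hexp

end PointwiseBounds

theorem statement2_general (d : ℕ) (f : Rd d → ℂ)
    (C : ℝ) (hC : 0 < C)
    (hest : ∀ α β : Fin d → ℕ, ∀ x : Rd d,
      ‖wD α β f x‖ ≤ C ^ (msize α + msize β + 1) * Mab α β) :
    ∃ C' > (0:ℝ), ∃ c > (0:ℝ), ∀ α : Fin d → ℕ, ∀ x : Rd d,
      ‖mderiv α f x‖ ≤ C' ^ (msize α + 1) * (mfact α) * (jap x ^ msize α)⁻¹ *
        Real.exp (-c * ‖x‖ ^ 2) := by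
  set c := log 2 / (8 * C ^ 2 * (d + 1))
  have hc : 0 < c := div_pos (log_pos one_lt_two) (by positivity)
  have hcd : c * d ≤ log 2 / (8 * C ^ 2) := by
    rw [div_mul_eq_mul_div, div_le_div_iff₀ (by positivity) (by positivity)]
    have := log_pos one_lt_two
    nlinarith [sq_nonneg C]
  set K₁ := max (C * exp c) (2 * C)
  set K₂ := max (√2 * C) (2 * C ^ 2 * √d)
  refine ⟨max K₁ (K₂ * d), lt_max_of_lt_left (by positivity), c, hc, fun α x => ?_⟩
  set m := msize α
  have hweighted : jap x ^ m * exp (c * ‖x‖ ^ 2) * ‖mderiv α f x‖ ≤ K₁ * K₂ ^ m * m ! := by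
    rcases le_or_gt ‖x‖ 1 with hx | hx
    · refine (weighted_norm_mderiv_le_of_norm_le_one (hest α · x) hc.le hx).trans ?_
      gcongr
      exacts [le_max_left _ _, le_max_left _ _]
    · refine (weighted_norm_mderiv_le_of_one_lt_norm (hest α · x) hC hc.le hcd hx).trans ?_
      gcongr
      exacts [le_max_right _ _, le_max_right _ _]
  have hfact : (m ! : ℝ) ≤ d ^ m * mfact α := by exact_mod_cast factorial_msize_le α
  have hK : K₁ * (K₂ * d) ^ m ≤ max K₁ (K₂ * d) ^ (m + 1) :=
    mul_pow_le_max_pow_succ (by positivity) (by positivity) m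
  have hjap := pow_pos (jap_pos x) m
  calc ‖mderiv α f x‖ = jap x ^ m * exp (c * ‖x‖ ^ 2) * ‖mderiv α f x‖ * (jap x ^ m)⁻¹ *
        exp (-c * ‖x‖ ^ 2) := by
        rw [neg_mul, exp_neg]
        field_simp
    _ ≤ K₁ * (K₂ * d) ^ m * mfact α * (jap x ^ m)⁻¹ * exp (-c * ‖x‖ ^ 2) := by
        gcongr ?_ * _ * _
        calc _ ≤ K₁ * K₂ ^ m * m ! := hweighted
          _ ≤ K₁ * K₂ ^ m * (d ^ m * mfact α) := by gcongr
          _ = K₁ * (K₂ * d) ^ m * mfact α := by ring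
    _ ≤ _ := by gcongr

/-- The estimates defining `H_sect` imply
`|∂^α f(x)| ≤ C'^{|α|+1} α! ⟨x⟩^{-|α|} e^{-c|x|²}`. -/
theorem statement2 (d : ℕ) (f : Rd d → ℂ) (hf : ContDiff ℝ (⊤ : ℕ∞) f)
    (C : ℝ) (hC : 0 < C)
    (hest : ∀ α β : Fin d → ℕ, ∀ x : Rd d,
      ‖wD α β f x‖ ≤ C ^ (msize α + msize β + 1) * Mab α β) :
    ∃ C' > (0:ℝ), ∃ c > (0:ℝ), ∀ α : Fin d → ℕ, ∀ x : Rd d,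
      ‖mderiv α f x‖ ≤ C' ^ (msize α + 1) * (mfact α) * (jap x ^ msize α)⁻¹ *
        Real.exp (-c * ‖x‖ ^ 2) :=
  statement2_general d f C hC hest
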